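/- Let α be a nonzero real number and d ≥ 1 an integer. Then the limit lim_{β→0⁺} ∫_{ℝ^d} exp(−(β − iα)·‖x‖²) dx exists and equals (iπ/α)^{d/2}, where ‖·‖ is the Euclidean norm on ℝ^d, the integral for β > 0 is an absolutely convergent Lebesgue integral, and w^{d/2} denotes the principal branch of the complex power. -/

import Mathlib

/-!
For `β > 0` the Gaussian integral equals `(π / (β - iα)) ^ (d / 2)`. As `β → 0` the base tends to
`π / (-iα) = iπ / α`, which has nonzero imaginary part and so lies off the branch cut of the
principal power; continuity of `z ↦ z ^ (d / 2)` there gives the limit.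
-/

open MeasureTheory Complex Filter Topology Real

lemma integrable_cexp_neg_mul_sq_norm {V : Type*} [NormedAddCommGroup V] [InnerProductSpace ℝ V]
    [FiniteDimensional ℝ V] [MeasurableSpace V] [BorelSpace V] {b : ℂ} (hb : 0 < b.re) :
    Integrable (fun x : V => cexp (-b * ‖x‖ ^ 2)) := by
  simpa using GaussianFourier.integrable_cexp_neg_mul_sq_norm_add hb 0 (0 : V)

lemma I_mul_pi_div_mem_slitPlane {α : ℝ} (hα : α ≠ 0) : I * π / α ∈ slitPlane := by
  refine mem_slitPlane_iff.mpr (Or.inr ?_)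
  rw [mul_div_assoc, ← ofReal_div, I_mul_im, ofReal_re]
  exact div_ne_zero pi_ne_zero hα

lemma tendsto_pi_div_sub_I_mul_cpow {α : ℝ} (hα : α ≠ 0) (s : ℂ) :
    Tendsto (fun β : ℝ => ((π : ℂ) / (β - I * α)) ^ s) (𝓝 0) (𝓝 ((I * π / α) ^ s)) := by
  have hαc : (α : ℂ) ≠ 0 := ofReal_ne_zero.mpr hα
  have hbase_zero : (π : ℂ) / ((0 : ℝ) - I * α) = I * π / α := by
    field_simp
    rw [ofReal_zero, zero_sub, mul_neg, ← mul_assoc, I_mul_I]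
    ring
  have hbase : Tendsto (fun β : ℝ => (π : ℂ) / (β - I * α)) (𝓝 0) (𝓝 (I * π / α)) := by
    rw [← hbase_zero]
    refine (continuous_const.div (continuous_ofReal.sub continuous_const) fun β => ?_).tendsto 0
    simpa [sub_eq_zero, Complex.ext_iff] using fun _ => Ne.symm hα
  exact ((continuousAt_cpow_const (I_mul_pi_div_mem_slitPlane hα)).tendsto).comp hbase

theorem regularized_fresnel_integral
    (α : ℝ) (hα : α ≠ 0) (d : ℕ) :
    (∀ β : ℝ, 0 < β →
      Integrable (fun x : EuclideanSpace ℝ (Fin d) =>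
        Complex.exp (-((β : ℂ) - Complex.I * (α : ℂ)) * ((‖x‖ ^ 2 : ℝ) : ℂ))))
    ∧ Filter.Tendsto
        (fun β : ℝ => ∫ x : EuclideanSpace ℝ (Fin d),
          Complex.exp (-((β : ℂ) - Complex.I * (α : ℂ)) * ((‖x‖ ^ 2 : ℝ) : ℂ)))
        (nhdsWithin 0 (Set.Ioi 0))
        (nhds ((Complex.I * (Real.pi : ℂ) / (α : ℂ)) ^ ((d : ℂ) / 2))) := by
  have hre : ∀ β : ℝ, 0 < β → 0 < ((β : ℂ) - I * α).re := fun β hβ => by simpa using hβ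
  simp only [ofReal_pow]
  refine ⟨fun β hβ => integrable_cexp_neg_mul_sq_norm (hre β hβ), ?_⟩
  refine ((tendsto_pi_div_sub_I_mul_cpow hα _).mono_left nhdsWithin_le_nhds).congr' ?_
  filter_upwards [self_mem_nhdsWithin] with β hβ
  rw [GaussianFourier.integral_cexp_neg_mul_sq_norm (hre β hβ), finrank_euclideanSpace_fin]
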